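/- Let α ∈ (0,1) and define λ₀ = (1 − α/2) ω₀^{(α)} and λ_k = (1 − α/2) ω_k^{(α)} + (α/2) ω_{k−1}^{(α)} for k ≥ 1, where ω_k^{(α)} = (−1)^k(−α choose k). Then for every positive integer k and every real vector (v₁,…,v_k), Σ_{n=0}^{k−1} ( Σ_{p=0}^{n} λ_p v_{n+1−p} ) v_{n+1} ≥ 0. -/

import Mathlib

/-- Coefficients `ω_k^{(α)} = (-1)^k (-α choose k)`. -/
noncomputable def omegaG (α : ℝ) (k : ℕ) : ℝ :=
  (-1) ^ k * ((∏ i ∈ Finset.range k, (-α - i)) / (k.factorial : ℝ))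

/-- Weighted coefficients `λ_k` for the diffusion-wave scheme. -/
noncomputable def lamW (α : ℝ) : ℕ → ℝ
  | 0 => (1 - α / 2) * omegaG α 0
  | k + 1 => (1 - α / 2) * omegaG α (k + 1) + α / 2 * omegaG α k

/-!
The coefficients `ω_p^{(α)} = Γ(α + p) / (Γ(α) p!)` are the moments `∫ x^p dμ` of the
Beta(α, 1 - α) distribution `μ` on `(0, 1)`. The quadratic form is linear in its coefficient
sequence, so it is the `μ`-average of the same form with geometric coefficients `x^p`. For those,
`U_m = ∑_{p<m} x^p v_{m-p}` satisfies `v_{n+1} = U_{n+1} - x U_n`, and each summand dominates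
`(2 - α + α x) / 4 · (U_{n+1}² - U_n²)`, which telescopes to a nonnegative total.
-/

open Finset MeasureTheory ProbabilityTheory

namespace DiffusionWave

variable (α : ℝ)

noncomputable def weightedCoeff (c : ℕ → ℝ) : ℕ → ℝ
  | 0 => (1 - α / 2) * c 0
  | p + 1 => (1 - α / 2) * c (p + 1) + α / 2 * c p

noncomputable def waveForm (c : ℕ → ℝ) (k : ℕ) (v : ℕ → ℝ) : ℝ :=
  ∑ n ∈ range k, (∑ p ∈ range (n + 1), weightedCoeff α c p * v (n + 1 - p)) * v (n + 1)

noncomputable def conv (c v : ℕ → ℝ) (m : ℕ) : ℝ :=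
  ∑ p ∈ range m, c p * v (m - p)

theorem sum_weightedCoeff_mul (c v : ℕ → ℝ) (n : ℕ) :
    ∑ p ∈ range (n + 1), weightedCoeff α c p * v (n + 1 - p) =
      (1 - α / 2) * conv c v (n + 1) + α / 2 * conv c v n := by
  simp only [conv, sum_range_succ' _ n, weightedCoeff, add_mul, sum_add_distrib, mul_assoc,
    ← mul_sum, Nat.add_sub_add_right]
  ring

theorem waveForm_eq_sum_conv (c : ℕ → ℝ) (k : ℕ) (v : ℕ → ℝ) :
    waveForm α c k v =
      ∑ n ∈ range k, ((1 - α / 2) * conv c v (n + 1) + α / 2 * conv c v n) * v (n + 1) := by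
  simp only [waveForm, sum_weightedCoeff_mul]

theorem conv_pow_succ (x : ℝ) (v : ℕ → ℝ) (m : ℕ) :
    conv (x ^ ·) v (m + 1) = v (m + 1) + x * conv (x ^ ·) v m := by
  rw [conv, sum_range_succ', conv, mul_sum]
  simp only [pow_succ, Nat.add_sub_add_right, pow_zero, one_mul, Nat.sub_zero, mul_assoc,
    mul_comm x]
  ring

/-- The defect is `(1 - x) (a + b)² / 4 + (1 - α) (1 + x) (b - a)² / 4`. -/
theorem mul_sq_sub_sq_le {α x : ℝ} (hα : α ≤ 1) (hx : x ∈ Set.Icc (-1) 1) (a b : ℝ) :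
    (2 - α + α * x) / 4 * (b ^ 2 - a ^ 2) ≤ ((1 - α / 2) * b + α / 2 * a) * (b - x * a) := by
  obtain ⟨hx₀, hx₁⟩ := hx
  nlinarith [mul_nonneg (sub_nonneg.2 hx₁) (sq_nonneg (a + b)),
    mul_nonneg (mul_nonneg (sub_nonneg.2 hα) (neg_le_iff_add_nonneg'.1 hx₀)) (sq_nonneg (b - a))]

theorem waveForm_pow_nonneg {α x : ℝ} (hα : α ≤ 1) (hx : x ∈ Set.Icc (-1) 1)
    (k : ℕ) (v : ℕ → ℝ) : 0 ≤ waveForm α (x ^ ·) k v := by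
  set U := conv (x ^ ·) v
  have hU : ∀ n, U (n + 1) = v (n + 1) + x * U n := conv_pow_succ x v
  have hc : 0 ≤ (2 - α + α * x) / 4 := by
    nlinarith [mul_nonneg (sub_nonneg.2 hα) (sub_nonneg.2 hx.2), hx.1]
  calc 0 ≤ (2 - α + α * x) / 4 * U k ^ 2 := by positivity
    _ = ∑ n ∈ range k, (2 - α + α * x) / 4 * (U (n + 1) ^ 2 - U n ^ 2) := by
      rw [← mul_sum, sum_range_sub (U · ^ 2), show U 0 = 0 from rfl]
      ring
    _ ≤ ∑ n ∈ range k, ((1 - α / 2) * U (n + 1) + α / 2 * U n) * v (n + 1) := by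
      refine sum_le_sum fun n _ => ?_
      rw [show v (n + 1) = U (n + 1) - x * U n by rw [hU]; ring]
      exact mul_sq_sub_sq_le hα hx _ _
    _ = waveForm α (x ^ ·) k v := (waveForm_eq_sum_conv α _ k v).symm

section Integral

variable {X : Type*} [MeasurableSpace X] {μ : Measure X} {f : ℕ → X → ℝ}

theorem integrable_weightedCoeff (hf : ∀ p, Integrable (f p) μ) (p : ℕ) :
    Integrable (fun x => weightedCoeff α (f · x) p) μ := by
  cases p with
  | zero => exact (hf 0).const_mul _
  | succ p => exact ((hf _).const_mul _).add ((hf _).const_mul _)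

theorem weightedCoeff_integral (hf : ∀ p, Integrable (f p) μ) (p : ℕ) :
    weightedCoeff α (fun q => ∫ x, f q x ∂μ) p = ∫ x, weightedCoeff α (f · x) p ∂μ := by
  cases p with
  | zero => exact (integral_const_mul _ _).symm
  | succ p =>
    simp only [weightedCoeff]
    rw [integral_add ((hf _).const_mul _) ((hf _).const_mul _), integral_const_mul,
      integral_const_mul]

theorem waveForm_integral (hf : ∀ p, Integrable (f p) μ) (k : ℕ) (v : ℕ → ℝ) :
    waveForm α (fun q => ∫ x, f q x ∂μ) k v = ∫ x, waveForm α (f · x) k v ∂μ := by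
  have hterm : ∀ n p, Integrable (fun x => weightedCoeff α (f · x) p * v (n + 1 - p)) μ :=
    fun n p => (integrable_weightedCoeff α hf p).mul_const _
  simp only [waveForm, weightedCoeff_integral α hf]
  rw [integral_finsetSum _ fun n _ => (integrable_finsetSum _ fun p _ => hterm n p).mul_const _]
  refine sum_congr rfl fun n _ => ?_
  rw [integral_mul_const, integral_finsetSum _ fun p _ => hterm n p]
  simp only [integral_mul_const]

end Integral

theorem waveForm_moments_nonneg {α : ℝ} (hα : α ≤ 1) {μ : Measure ℝ} [IsFiniteMeasure μ]
    (hμ : ∀ᵐ x ∂μ, x ∈ Set.Icc (-1) 1) (k : ℕ) (v : ℕ → ℝ) :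
    0 ≤ waveForm α (fun p => ∫ x, x ^ p ∂μ) k v := by
  have hint (p : ℕ) : Integrable (fun x : ℝ => x ^ p) μ :=
    .of_bound (by fun_prop) 1 <| hμ.mono fun x hx => by
      simpa only [norm_pow, Real.norm_eq_abs] using pow_le_one₀ (abs_nonneg x) (abs_le.2 hx)
  rw [waveForm_integral α hint]
  exact integral_nonneg_of_ae <| hμ.mono fun x hx => waveForm_pow_nonneg hα hx k v

end DiffusionWave

namespace ProbabilityTheory

theorem beta_add_one_left {a b : ℝ} (ha : a ≠ 0) (hab : a + b ≠ 0) :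
    beta (a + 1) b = beta a b * a / (a + b) := by
  rw [beta, beta, add_right_comm, Real.Gamma_add_one ha, Real.Gamma_add_one hab]
  simp only [div_eq_mul_inv, mul_inv]
  ring

theorem measurable_betaPDF {a b : ℝ} : Measurable (betaPDF a b) :=
  (measurable_betaPDFReal a b).ennreal_ofReal

theorem betaPDFReal_nonneg {a b : ℝ} (ha : 0 < a) (hb : 0 < b) (x : ℝ) :
    0 ≤ betaPDFReal a b x := by
  by_cases hx : 0 < x ∧ x < 1
  · exact (betaPDFReal_pos hx.1 hx.2 ha hb).le
  · simp [betaPDFReal, hx]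

theorem integral_betaPDFReal {a b : ℝ} (ha : 0 < a) (hb : 0 < b) :
    ∫ x, betaPDFReal a b x = 1 := by
  rw [integral_eq_lintegral_of_nonneg_ae (.of_forall (betaPDFReal_nonneg ha hb)) (by fun_prop)]
  exact (ENNReal.toReal_eq_one_iff _).2 (lintegral_betaPDF_eq_one ha hb)

theorem betaPDFReal_mul_pow {a b : ℝ} (ha : 0 < a) (hb : 0 < b) (p : ℕ) (x : ℝ) :
    betaPDFReal a b x * x ^ p = beta (a + p) b / beta a b * betaPDFReal (a + p) b x := by
  unfold betaPDFReal
  split_ifs with hx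
  · rw [add_sub_right_comm, Real.rpow_add hx.1, Real.rpow_natCast]
    have := (beta_pos ha hb).ne'
    have := (beta_pos (by positivity : 0 < a + p) hb).ne'
    field_simp
  · simp

theorem integral_pow_betaMeasure {a b : ℝ} (ha : 0 < a) (hb : 0 < b) (p : ℕ) :
    ∫ x, x ^ p ∂betaMeasure a b = beta (a + p) b / beta a b := by
  rw [betaMeasure, integral_withDensity_eq_integral_toReal_smul
    measurable_betaPDF (.of_forall fun _ => ENNReal.ofReal_lt_top)]
  simp only [betaPDF, ENNReal.toReal_ofReal (betaPDFReal_nonneg ha hb _), smul_eq_mul,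
    betaPDFReal_mul_pow ha hb, integral_const_mul,
    integral_betaPDFReal (by positivity : 0 < a + p) hb, mul_one]

theorem ae_mem_Ioo_betaMeasure (a b : ℝ) : ∀ᵐ x ∂betaMeasure a b, x ∈ Set.Ioo 0 1 := by
  rw [betaMeasure, ae_withDensity_iff measurable_betaPDF]
  refine .of_forall fun x hx => ⟨?_, ?_⟩
  · exact not_le.1 fun h => hx (betaPDF_eq_zero_of_nonpos h)
  · exact not_le.1 fun h => hx (betaPDF_eq_zero_of_one_le h)

end ProbabilityTheory

theorem lamW_eq_weightedCoeff (α : ℝ) : lamW α = DiffusionWave.weightedCoeff α (omegaG α) := by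
  funext p
  cases p <;> rfl

theorem omegaG_succ (α : ℝ) (p : ℕ) : omegaG α (p + 1) = omegaG α p * (α + p) / (p + 1) := by
  simp only [omegaG, Finset.prod_range_succ, Nat.factorial_succ, pow_succ]
  push_cast
  field_simp
  ring

theorem omegaG_eq_beta_div_beta {α : ℝ} (hα : α ∈ Set.Ioo 0 1) (p : ℕ) :
    omegaG α p = beta (α + p) (1 - α) / beta α (1 - α) := by
  obtain ⟨hα₀, hα₁⟩ := hα
  induction p with
  | zero => simp [omegaG, (beta_pos hα₀ (sub_pos.2 hα₁)).ne']
  | succ p ih =>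
    have hp : α + p ≠ 0 := by positivity
    rw [omegaG_succ, ih, Nat.cast_succ, ← add_assoc, beta_add_one_left hp (by positivity),
      show α + p + (1 - α) = p + 1 by ring]
    ring

theorem quadratic_form_nonneg_wave_general (α : ℝ) (hα : α ∈ Set.Ioo (0 : ℝ) 1)
    (k : ℕ) (v : ℕ → ℝ) :
    0 ≤ ∑ n ∈ Finset.range k,
        (∑ p ∈ Finset.range (n + 1), lamW α p * v (n + 1 - p)) * v (n + 1) := by
  have hβ : 0 < 1 - α := sub_pos.2 hα.2
  have := isProbabilityMeasureBeta hα.1 hβ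
  have hω : omegaG α = fun p => ∫ x, x ^ p ∂betaMeasure α (1 - α) := funext fun p => by
    rw [integral_pow_betaMeasure hα.1 hβ, omegaG_eq_beta_div_beta hα]
  rw [lamW_eq_weightedCoeff, hω]
  exact DiffusionWave.waveForm_moments_nonneg hα.2.le
    ((ae_mem_Ioo_betaMeasure _ _).mono fun x hx => ⟨by linarith [hx.1], hx.2.le⟩) k v

theorem quadratic_form_nonneg_wave (α : ℝ) (hα : α ∈ Set.Ioo (0 : ℝ) 1)
    (k : ℕ) (hk : 0 < k) (v : ℕ → ℝ) :
    0 ≤ ∑ n ∈ Finset.range k,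
        (∑ p ∈ Finset.range (n + 1), lamW α p * v (n + 1 - p)) * v (n + 1) :=
  quadratic_form_nonneg_wave_general α hα k v
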